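/- Let B be a bicategory and W a class of arrows satisfying [WB1]–[WB5], and let Ŵ be its closure under composition and invertible 2-cells. Then W is weakly initial in Ŵ: for every w ∈ Ŵ there exists an arrow u such that w ∘ u ∈ W. -/

import Mathlib

open CategoryTheory Bicategory

universe w v u

/-- A class of 1-morphisms in a bicategory. -/
def WClass (B : Type u) [Bicategory.{w, v} B] :=
  ∀ ⦃a b : B⦄, (a ⟶ b) → Prop

namespace WClass

variable {B : Type u} [Bicategory.{w, v} B]

/-- [WB1]: all identities are in `W`. -/
def WB1 (W : WClass B) : Prop := ∀ a : B, W (𝟙 a)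

/-- [WB2]: for composable arrows of `W` there is a pre-composition landing in `W`. -/
def WB2 (W : WClass B) : Prop :=
  ∀ ⦃a b c : B⦄ (vm : a ⟶ b) (wm : b ⟶ c), W vm → W wm →
    ∃ (a' : B) (u : a' ⟶ a), W (u ≫ vm ≫ wm)

/-- [WB3]: squares with invertible fillers over cospans with one leg in `W`. -/
def WB3 (W : WClass B) : Prop :=
  ∀ ⦃a b c : B⦄ (wm : a ⟶ b) (f : c ⟶ b), W wm →
    ∃ (d : B) (h : d ⟶ a) (vm : d ⟶ c), W vm ∧ Nonempty (h ≫ wm ≅ vm ≫ f)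

/-- `β` is a lifting of the 2-cell `η : f ≫ wm ⟶ g ≫ wm` along `wm`, via `u`. -/
def IsLift ⦃a b c : B⦄ (f g : a ⟶ b) (wm : b ⟶ c) (η : f ≫ wm ⟶ g ≫ wm)
    ⦃a' : B⦄ (u : a' ⟶ a) (β : u ≫ f ⟶ u ≫ g) : Prop :=
  β ▷ wm = (α_ u f wm).hom ≫ u ◁ η ≫ (α_ u g wm).inv

/-- [WB4]: existence of liftings of 2-cells along arrows of `W`, together with
the compatibility of any two such liftings. -/
def WB4 (W : WClass B) : Prop :=
  (∀ ⦃a b c : B⦄ (f g : a ⟶ b) (wm : b ⟶ c), W wm → ∀ η : f ≫ wm ⟶ g ≫ wm,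
    ∃ (a' : B) (u : a' ⟶ a), W u ∧ ∃ β : u ≫ f ⟶ u ≫ g, IsLift f g wm η u β) ∧
  (∀ ⦃a b c : B⦄ (f g : a ⟶ b) (wm : b ⟶ c), W wm → ∀ η : f ≫ wm ⟶ g ≫ wm,
    ∀ ⦃a₁ : B⦄ (u₁ : a₁ ⟶ a) (β₁ : u₁ ≫ f ⟶ u₁ ≫ g), W u₁ → IsLift f g wm η u₁ β₁ →
      ∀ ⦃a₂ : B⦄ (u₂ : a₂ ⟶ a) (β₂ : u₂ ≫ f ⟶ u₂ ≫ g), W u₂ → IsLift f g wm η u₂ β₂ →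
        ∃ (d : B) (s : d ⟶ a₁) (t : d ⟶ a₂), W (s ≫ u₁) ∧ W (t ≫ u₂) ∧
          ∃ θ : s ≫ u₁ ≅ t ≫ u₂,
            ((α_ s u₁ f).hom ≫ s ◁ β₁ ≫ (α_ s u₁ g).inv) ≫ θ.hom ▷ g =
              θ.hom ▷ f ≫ (α_ t u₂ f).hom ≫ t ◁ β₂ ≫ (α_ t u₂ g).inv)

/-- [WB5]: `W` is closed under invertible 2-cells. -/
def WB5 (W : WClass B) : Prop :=
  ∀ ⦃a b : B⦄ (vm wm : a ⟶ b), W wm → Nonempty (vm ≅ wm) → W vm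

end WClass

/-- The closure of a class of 1-morphisms under composition and invertible 2-cells. -/
inductive WClass.Hat {B : Type u} [Bicategory.{w, v} B] (W : WClass B) :
    ∀ ⦃a b : B⦄, (a ⟶ b) → Prop
  | of {a b : B} {f : a ⟶ b} : W f → WClass.Hat W f
  | comp {a b c : B} {f : a ⟶ b} {g : b ⟶ c} :
      WClass.Hat W f → WClass.Hat W g → WClass.Hat W (f ≫ g)
  | iso {a b : B} {f g : a ⟶ b} : WClass.Hat W f → (g ≅ f) → WClass.Hat W g

/-- The closure `Ŵ` regarded as a class of 1-morphisms. -/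
def WClass.hat {B : Type u} [Bicategory.{w, v} B] (W : WClass B) : WClass B :=
  fun _ _ f => WClass.Hat W f

/-! An arrow of `Ŵ` is built from arrows of `W` by composition and invertible 2-cells, so it
suffices that the property "some precomposite lies in `W`" holds on `W` (precompose with an
identity), is invariant under invertible 2-cells, and is stable under composition. For the last
point, given `u ≫ f ∈ W` and `u' ≫ g ∈ W`, [WB3] completes the cospan `(u ≫ f, u')` to a square
with a leg `vm ∈ W`, and [WB2] applied to `vm` and `u' ≫ g` gives `u'' ≫ vm ≫ u' ≫ g ∈ W`, which
is isomorphic to a precomposite of `f ≫ g`. -/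

namespace WClass

variable {B : Type u} [Bicategory.{w, v} B] {W : WClass B}

theorem WB5.of_iso (h5 : W.WB5) {a b : B} {f g : a ⟶ b} (hf : W f) (e : g ≅ f) : W g :=
  h5 g f hf ⟨e⟩

theorem WB5.exists_comp_mem_of_mem (h5 : W.WB5) {a b : B} {f : a ⟶ b} (hf : W f) :
    ∃ (c : B) (u : c ⟶ a), W (u ≫ f) :=
  ⟨a, 𝟙 a, h5.of_iso hf (λ_ f)⟩

theorem WB5.exists_comp_mem_of_iso (h5 : W.WB5) {a b : B} {f g : a ⟶ b} (e : g ≅ f)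
    (hf : ∃ (c : B) (u : c ⟶ a), W (u ≫ f)) : ∃ (c : B) (u : c ⟶ a), W (u ≫ g) :=
  let ⟨c, u, hu⟩ := hf
  ⟨c, u, h5.of_iso hu (whiskerLeftIso u e)⟩

theorem exists_comp_mem_comp (h2 : W.WB2) (h3 : W.WB3) (h5 : W.WB5) {a b c : B}
    {f : a ⟶ b} {g : b ⟶ c} (hf : ∃ (a₀ : B) (u : a₀ ⟶ a), W (u ≫ f))
    (hg : ∃ (b₀ : B) (u' : b₀ ⟶ b), W (u' ≫ g)) :
    ∃ (d : B) (u : d ⟶ a), W (u ≫ f ≫ g) := by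
  obtain ⟨a₀, u, hu⟩ := hf
  obtain ⟨b₀, u', hu'⟩ := hg
  obtain ⟨d, h, vm, hvm, ⟨φ⟩⟩ := h3 (u ≫ f) u' hu
  obtain ⟨e, u'', hu''⟩ := h2 vm (u' ≫ g) hvm hu'
  exact ⟨e, u'' ≫ h ≫ u, h5.of_iso hu''
    (Iso.refl _ ≪⊗≫ whiskerLeftIso u'' (whiskerRightIso φ g) ≪⊗≫ Iso.refl _)⟩

end WClass

theorem statement7_general {B : Type u} [Bicategory.{w, v} B] (W : WClass B)
    (h2 : W.WB2) (h3 : W.WB3) (h5 : W.WB5)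
    ⦃a b : B⦄ (f : a ⟶ b) (hf : W.hat f) :
    ∃ (c : B) (u : c ⟶ a), W (u ≫ f) := by
  induction hf with
  | of hW => exact h5.exists_comp_mem_of_mem hW
  | comp _ _ ihf ihg => exact W.exists_comp_mem_comp h2 h3 h5 ihf ihg
  | iso _ e ih => exact h5.exists_comp_mem_of_iso e ih

theorem statement7 {B : Type u} [Bicategory.{w, v} B] (W : WClass B)
    (h1 : W.WB1) (h2 : W.WB2) (h3 : W.WB3) (h4 : W.WB4) (h5 : W.WB5)
    ⦃a b : B⦄ (f : a ⟶ b) (hf : W.hat f) :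
    ∃ (c : B) (u : c ⟶ a), W (u ≫ f) :=
  statement7_general W h2 h3 h5 (a := a) (b := b) f hf
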